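/- arXiv:2605.13679 — 6 statements merged into one kernel-verified Lean document; each statement's English description precedes it below -/
import Mathlib

section
/- Let 0<α<1, k>0, φ>0, N>0, γ>0. The function U(n,e) = ln((1 - n k φ N^γ) k - n e) + ln n + α ln e, defined on the set of (n,e) with n>0, e>0 and (1 - n k φ N^γ) k - n e > 0, attains its unique critical point at n* = (1-α)/(2 k φ N^γ) and e* = (α/(1-α)) k² φ N^γ. -/
/-!
Write `c = k φ N^γ` and `D = (1 - n c) k - n e` for consumption. Clearing the denominators
`D`, `n`, `e`, the two first-order conditions become `D = n (c k + e)` and `n e = α D`.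
Dividing the second by the first gives `e = α (c k + e)`, which fixes `e`; substituting into the
first, `k = 2 n (c k + e)` then fixes `n`.
-/

open Real

namespace Household

variable {α c k : ℝ}

theorem hasDerivAt_utility_fst {n e : ℝ} (C : ℝ) (hn : n ≠ 0)
    (hD : (1 - n * c) * k - n * e ≠ 0) :
    HasDerivAt (fun x => log ((1 - x * c) * k - x * e) + log x + C)
      (-(c * k + e) / ((1 - n * c) * k - n * e) + 1 / n) n := by
  have hbudget : HasDerivAt (fun x => (1 - x * c) * k - x * e) (-(c * k + e)) n :=
    ((((hasDerivAt_id' n).mul_const c).const_sub 1).mul_const k).sub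
      ((hasDerivAt_id' n).mul_const e) |>.congr_deriv (by ring)
  exact ((hbudget.log hD).add (hasDerivAt_log hn) |>.add_const C).congr_deriv (by rw [one_div])

theorem hasDerivAt_utility_snd {n e : ℝ} (C : ℝ) (he : e ≠ 0)
    (hD : (1 - n * c) * k - n * e ≠ 0) :
    HasDerivAt (fun y => log ((1 - n * c) * k - n * y) + C + α * log y)
      (-n / ((1 - n * c) * k - n * e) + α / e) e := by
  have hbudget : HasDerivAt (fun y => (1 - n * c) * k - n * y) (-n) e := by
    simpa using ((hasDerivAt_id e).const_mul n).const_sub ((1 - n * c) * k)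
  exact ((hbudget.log hD).add_const C |>.add ((hasDerivAt_log he).const_mul α)).congr_deriv
    (by rw [div_eq_mul_inv α])

theorem neg_div_add_div_eq_zero_iff {a b x y : ℝ} (hx : x ≠ 0) (hy : y ≠ 0) :
    -a / x + b / y = 0 ↔ a * y = b * x := by
  rw [neg_div, neg_add_eq_zero, div_eq_div_iff hx hy]

theorem first_order_conditions_iff {n e : ℝ} (hα : α ≠ 1) (hc : c ≠ 0) (hk : k ≠ 0)
    (hn : n ≠ 0) :
    ((c * k + e) * n = (1 - n * c) * k - n * e ∧ n * e = α * ((1 - n * c) * k - n * e))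
      ↔ n = (1 - α) / (2 * c) ∧ e = α / (1 - α) * c * k := by
  have h1α : 1 - α ≠ 0 := sub_ne_zero.mpr hα.symm
  constructor
  · rintro ⟨hfst, hsnd⟩
    have he : (1 - α) * e = α * c * k :=
      mul_left_cancel₀ hn (by linear_combination hsnd - α * hfst)
    have he' : e = α / (1 - α) * c * k := by
      field_simp
      linear_combination he
    refine ⟨?_, he'⟩
    rw [he'] at hfst
    field_simp at hfst ⊢
    linear_combination hfst
  · rintro ⟨rfl, rfl⟩
    constructor <;> field_simp <;> ring

end Household

open Household

theorem stmt_0_general (α k φ N γ : ℝ) (hα1 : α < 1)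
    (hk : 0 < k) (hφ : 0 < φ) (hN : 0 < N) :
    ∀ n e : ℝ, 0 < n → 0 < e → 0 < (1 - n * k * φ * N ^ γ) * k - n * e →
      ((deriv (fun x : ℝ =>
          Real.log ((1 - x * k * φ * N ^ γ) * k - x * e) + Real.log x
            + α * Real.log e) n = 0 ∧
        deriv (fun y : ℝ =>
          Real.log ((1 - n * k * φ * N ^ γ) * k - n * y) + Real.log n
            + α * Real.log y) e = 0)
       ↔ (n = (1 - α) / (2 * k * φ * N ^ γ)
            ∧ e = (α / (1 - α)) * k ^ 2 * φ * N ^ γ)) := by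
  intro n e hn he hD
  have hθ (x : ℝ) : x * k * φ * N ^ γ = x * (k * φ * N ^ γ) := by ring
  simp only [hθ] at hD ⊢
  rw [(hasDerivAt_utility_fst _ hn.ne' hD.ne').deriv,
    (hasDerivAt_utility_snd _ he.ne' hD.ne').deriv,
    neg_div_add_div_eq_zero_iff hD.ne' hn.ne', neg_div_add_div_eq_zero_iff hD.ne' he.ne',
    one_mul, first_order_conditions_iff hα1.ne (by positivity) hk.ne' hn.ne']
  ring_nf

/-- Household optimization under perfect substitutability: the utility
`U(n,e) = log((1 - n k φ N^γ) k - n e) + log n + α log e` has its unique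
critical point (both partial derivatives vanish) at
`n* = (1-α)/(2 k φ N^γ)`, `e* = (α/(1-α)) k² φ N^γ`. -/
theorem stmt_0 (α k φ N γ : ℝ) (hα : 0 < α) (hα1 : α < 1)
    (hk : 0 < k) (hφ : 0 < φ) (hN : 0 < N) (hγ : 0 < γ) :
    ∀ n e : ℝ, 0 < n → 0 < e → 0 < (1 - n * k * φ * N ^ γ) * k - n * e →
      ((deriv (fun x : ℝ =>
          Real.log ((1 - x * k * φ * N ^ γ) * k - x * e) + Real.log x
            + α * Real.log e) n = 0 ∧
        deriv (fun y : ℝ =>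
          Real.log ((1 - n * k * φ * N ^ γ) * k - n * y) + Real.log n
            + α * Real.log y) e = 0)
       ↔ (n = (1 - α) / (2 * k * φ * N ^ γ)
            ∧ e = (α / (1 - α)) * k ^ 2 * φ * N ^ γ)) :=
  stmt_0_general α k φ N γ hα1 hk hφ hN
end

section
/- Let 0<α<1, k>0, φ>0, N>0, γ>0. The function U(n,e) = ln((1 - 2 n k φ N^γ) k - n e) + ln n + α ln e, defined on the set of (n,e) with n>0, e>0 and (1 - 2 n k φ N^γ) k - n e > 0, attains its unique critical point at n* = (1-α)/(4 k φ N^γ) and e* = 2(α/(1-α)) k² φ N^γ. -/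
/-!
Write `c = (1 - q n) k - n e` for consumption, where `q = 2 k φ N^γ` is the time cost per child.
The first-order conditions of `U` read `c = n (q k + e)` and `α c = n e`. Since also
`c = k - n (q k + e)`, the first gives `c = k / 2`; the second then fixes `n e = α k / 2`,
hence `n q k = (1 - α) k / 2`, which determines `n` and then `e`.
-/

open Real

noncomputable def householdUtility (α k q n e : ℝ) : ℝ :=
  log ((1 - q * n) * k - n * e) + log n + α * log e

section householdUtility

variable {α k q n e : ℝ}

theorem hasDerivAt_householdUtility_fertility (hn : n ≠ 0)
    (hc : (1 - q * n) * k - n * e ≠ 0) :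
    HasDerivAt (fun x => householdUtility α k q x e)
      (-(q * k + e) / ((1 - q * n) * k - n * e) + n⁻¹) n := by
  have hconsumption : HasDerivAt (fun x => (1 - q * x) * k - x * e) (-(q * k + e)) n :=
    ((((hasDerivAt_id' n).const_mul q).const_sub 1).mul_const k).sub
      ((hasDerivAt_id' n).mul_const e) |>.congr_deriv (by ring)
  exact ((hconsumption.log hc).add (hasDerivAt_log hn)).add_const _

theorem hasDerivAt_householdUtility_education (he : e ≠ 0)
    (hc : (1 - q * n) * k - n * e ≠ 0) :
    HasDerivAt (fun y => householdUtility α k q n y)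
      (-n / ((1 - q * n) * k - n * e) + α * e⁻¹) e := by
  have hconsumption : HasDerivAt (fun y => (1 - q * n) * k - n * y) (-n) e := by
    simpa using ((hasDerivAt_id e).const_mul n).const_sub ((1 - q * n) * k)
  exact ((hconsumption.log hc).add_const _).add ((hasDerivAt_log he).const_mul α)

end householdUtility

theorem neg_div_add_inv_eq_zero_iff {K : Type*} [Field K] {a c n : K} (hc : c ≠ 0)
    (hn : n ≠ 0) : -a / c + n⁻¹ = 0 ↔ c = n * a := by
  rw [neg_div, neg_add_eq_zero, div_eq_iff hc, eq_comm, inv_mul_eq_iff_eq_mul₀ hn]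

theorem neg_div_add_mul_inv_eq_zero_iff {K : Type*} [Field K] {α c n e : K} (hc : c ≠ 0)
    (he : e ≠ 0) : -n / c + α * e⁻¹ = 0 ↔ α * c = n * e := by
  rw [neg_div, neg_add_eq_zero, div_eq_iff hc, eq_comm, ← div_eq_mul_inv, div_mul_eq_mul_div,
    div_eq_iff he]

theorem householdUtility_foc_iff {α k q n e : ℝ} (hα : α ≠ 1) (hk : k ≠ 0) (hq : q ≠ 0) :
    ((1 - q * n) * k - n * e = n * (q * k + e) ∧ α * ((1 - q * n) * k - n * e) = n * e) ↔
      (n = (1 - α) / (2 * q) ∧ e = α * q * k / (1 - α)) := by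
  have h1α : 1 - α ≠ 0 := sub_ne_zero.2 hα.symm
  constructor
  · rintro ⟨hbudget, hshare⟩
    have hhalf : (1 - q * n) * k - n * e = k / 2 := by linear_combination hbudget / 2
    have hne : n * e = α * k / 2 := by rw [← hshare, hhalf]; ring
    have hnq : n * q = (1 - α) / 2 := by
      apply mul_right_cancel₀ hk
      linear_combination -hhalf - hne
    constructor
    · rw [eq_div_iff (mul_ne_zero two_ne_zero hq)]
      linear_combination 2 * hnq
    · rw [eq_div_iff h1α]
      linear_combination 2 * q * hne - 2 * e * hnq
  · rintro ⟨rfl, rfl⟩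
    constructor <;> field_simp <;> ring

theorem stmt_1_general (α k φ N γ : ℝ) (hα1 : α < 1)
    (hk : 0 < k) (hφ : 0 < φ) (hN : 0 < N) :
    ∀ n e : ℝ, 0 < n → 0 < e → 0 < (1 - 2 * n * k * φ * N ^ γ) * k - n * e →
      ((deriv (fun x : ℝ =>
          Real.log ((1 - 2 * x * k * φ * N ^ γ) * k - x * e) + Real.log x
            + α * Real.log e) n = 0 ∧
        deriv (fun y : ℝ =>
          Real.log ((1 - 2 * n * k * φ * N ^ γ) * k - n * y) + Real.log n
            + α * Real.log y) e = 0)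
       ↔ (n = (1 - α) / (4 * k * φ * N ^ γ)
            ∧ e = 2 * (α / (1 - α)) * k ^ 2 * φ * N ^ γ)) := by
  intro n e hn he hc
  have hq : 2 * k * φ * N ^ γ ≠ 0 := by positivity
  have hU : ∀ x y, log ((1 - 2 * x * k * φ * N ^ γ) * k - x * y) + log x + α * log y =
      householdUtility α k (2 * k * φ * N ^ γ) x y := fun x y => by
    unfold householdUtility; ring_nf
  replace hc : 0 < (1 - 2 * k * φ * N ^ γ * n) * k - n * e := by linarith
  simp only [hU]
  rw [(hasDerivAt_householdUtility_fertility hn.ne' hc.ne').deriv,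
    (hasDerivAt_householdUtility_education he.ne' hc.ne').deriv,
    neg_div_add_inv_eq_zero_iff hc.ne' hn.ne', neg_div_add_mul_inv_eq_zero_iff hc.ne' he.ne',
    householdUtility_foc_iff hα1.ne hk.ne' hq]
  refine and_congr (by ring_nf) (by ring_nf)

/-- Household optimization under perfect complementarity: the utility
`U(n,e) = log((1 - 2 n k φ N^γ) k - n e) + log n + α log e` has its unique
critical point at `n* = (1-α)/(4 k φ N^γ)`, `e* = 2(α/(1-α)) k² φ N^γ`. -/
theorem stmt_1 (α k φ N γ : ℝ) (hα : 0 < α) (hα1 : α < 1)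
    (hk : 0 < k) (hφ : 0 < φ) (hN : 0 < N) (hγ : 0 < γ) :
    ∀ n e : ℝ, 0 < n → 0 < e → 0 < (1 - 2 * n * k * φ * N ^ γ) * k - n * e →
      ((deriv (fun x : ℝ =>
          Real.log ((1 - 2 * x * k * φ * N ^ γ) * k - x * e) + Real.log x
            + α * Real.log e) n = 0 ∧
        deriv (fun y : ℝ =>
          Real.log ((1 - 2 * n * k * φ * N ^ γ) * k - n * y) + Real.log n
            + α * Real.log y) e = 0)
       ↔ (n = (1 - α) / (4 * k * φ * N ^ γ)
            ∧ e = 2 * (α / (1 - α)) * k ^ 2 * φ * N ^ γ)) :=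
  stmt_1_general α k φ N γ hα1 hk hφ hN
end

section
/- Let A>0, φ>0, 0<α, 0<β, α+β<1, 0<γ<1. The system k = A[(α/(1-α)) k² φ N^γ]^α k^β, N = ((1-α)/(2φk)) N^{1-γ} has a unique solution with k>0, N>0, given by k̄_S = (A^{1/α} α/2)^{α/(1-β-α)} and N̄_S = A^{-1/((1-β-α)γ)} ((1-α)/(2φ))^{(1-β-2α)/((1-β-α)γ)} [(α/(1-α))φ]^{-α/((1-β-α)γ)}. -/
open Real

/-!
Taking logarithms turns the steady-state system into a linear system in `(log k, log N)`.
The population equation gives `γ log N = log c - log k` with `c = (1-α)/(2φ)`; substituting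
into the capital equation, the product of the weights `α/(1-α)`, `φ` and `c` is `α/2`, so
`(1 - β - α) log k = log A + α log (α/2)`. Both coefficients `1 - β - α` and `γ` are nonzero,
so the solution is unique and equals the logarithm of the stated closed form.
-/

lemma eq_iff_log_eq_log {x y : ℝ} (hx : 0 < x) (hy : 0 < y) : x = y ↔ log x = log y :=
  (log_injOn_pos.eq_iff hx hy).symm

lemma log_rpow_mul_rpow_mul_rpow {x y z : ℝ} (hx : 0 < x) (hy : 0 < y) (hz : 0 < z)
    (a b c : ℝ) : log (x ^ a * y ^ b * z ^ c) = a * log x + b * log y + c * log z := by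
  rw [log_mul (by positivity) (by positivity), log_mul (by positivity) (by positivity),
    log_rpow hx, log_rpow hy, log_rpow hz]

lemma linear_system_iff {α β γ p q x y : ℝ} (hD : 1 - β - α ≠ 0) (hγ : γ ≠ 0) :
    (x = p + α * (2 * x + γ * y) + β * x ∧ y = q - x + (1 - γ) * y) ↔
      (x = (p + α * q) / (1 - β - α) ∧ y = (q - (p + α * q) / (1 - β - α)) / γ) := by
  constructor
  · rintro ⟨hcap, hpop⟩
    have hx : x = (p + α * q) / (1 - β - α) := by
      rw [eq_div_iff hD]; linear_combination hcap + α * hpop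
    refine ⟨hx, ?_⟩
    rw [← hx, eq_div_iff hγ]; linear_combination hpop
  · rintro ⟨hx, hy⟩
    rw [eq_div_iff hγ, ← hx] at hy
    rw [eq_div_iff hD] at hx
    constructor
    · linear_combination hx - α * hy
    · linear_combination hy

section Logarithms

variable {A a φ c α β γ k N : ℝ}

lemma log_capital_law (hA : 0 < A) (ha : 0 < a) (hφ : 0 < φ) (hk : 0 < k) (hN : 0 < N) :
    log (A * (a * k ^ 2 * φ * N ^ γ) ^ α * k ^ β)
      = (log A + α * (log a + log φ)) + α * (2 * log k + γ * log N) + β * log k := by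
  rw [log_mul (by positivity) (by positivity), log_mul hA.ne' (by positivity),
    log_rpow (by positivity), log_rpow hk, log_mul (by positivity) (by positivity),
    log_mul (by positivity) hφ.ne', log_mul ha.ne' (by positivity), log_pow, log_rpow hN]
  push_cast
  ring

lemma log_population_law (hc : 0 < c) (hk : 0 < k) (hN : 0 < N) :
    log (c / k * N ^ (1 - γ)) = log c - log k + (1 - γ) * log N := by
  rw [log_mul (by positivity) (by positivity), log_div hc.ne' hk.ne', log_rpow hN]

lemma log_capital_steady_state (hA : 0 < A) (hα : 0 < α) :
    log ((A ^ (1 / α) * α / 2) ^ (α / (1 - β - α)))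
      = (log A + α * log (α / 2)) / (1 - β - α) := by
  rw [log_rpow (by positivity), mul_div_assoc, log_mul (by positivity) (by positivity),
    log_rpow hA]
  field_simp

end Logarithms

theorem stmt_3_general (A φ α β γ : ℝ) (hA : 0 < A) (hφ : 0 < φ)
    (hα : 0 < α) (hβ : 0 < β) (hαβ : α + β < 1) (hγ0 : 0 < γ) :
    ∀ k N : ℝ, 0 < k → 0 < N →
      ((k = A * ((α / (1 - α)) * k ^ 2 * φ * N ^ γ) ^ α * k ^ β ∧
        N = ((1 - α) / (2 * φ * k)) * N ^ (1 - γ))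
       ↔ (k = (A ^ (1 / α) * α / 2) ^ (α / (1 - β - α)) ∧
          N = A ^ (-1 / ((1 - β - α) * γ))
              * ((1 - α) / (2 * φ)) ^ ((1 - β - 2 * α) / ((1 - β - α) * γ))
              * ((α / (1 - α)) * φ) ^ (-α / ((1 - β - α) * γ)))) := by
  intro k N hk hN
  have hα1 : 0 < 1 - α := by linarith
  have hD : 0 < 1 - β - α := by linarith
  have hweights : log (α / (1 - α)) + log φ + log ((1 - α) / (2 * φ)) = log (α / 2) := by
    rw [← log_mul (by positivity) hφ.ne', ← log_mul (by positivity) (by positivity)]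
    congr 1
    field_simp
  rw [← div_div, eq_iff_log_eq_log hk (by positivity), eq_iff_log_eq_log hN (by positivity),
    eq_iff_log_eq_log hk (by positivity), eq_iff_log_eq_log hN (by positivity),
    log_capital_law hA (by positivity) hφ hk hN, log_population_law (by positivity) hk hN,
    linear_system_iff hD.ne' hγ0.ne', log_capital_steady_state hA hα,
    log_rpow_mul_rpow_mul_rpow hA (by positivity) (by positivity),
    log_mul (by positivity) hφ.ne', ← hweights]
  refine and_congr (Eq.congr_right ?_) (Eq.congr_right ?_)
  · ring
  · field_simp
    ring

/-- Steady state of the perfect-substitutes system: the system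
`k = A ((α/(1-α)) k² φ N^γ)^α k^β`, `N = ((1-α)/(2φk)) N^{1-γ}` has the unique
positive solution `(k̄_S, N̄_S)` given in Proposition 1. -/
theorem stmt_3 (A φ α β γ : ℝ) (hA : 0 < A) (hφ : 0 < φ)
    (hα : 0 < α) (hβ : 0 < β) (hαβ : α + β < 1) (hγ0 : 0 < γ) (hγ1 : γ < 1) :
    ∀ k N : ℝ, 0 < k → 0 < N →
      ((k = A * ((α / (1 - α)) * k ^ 2 * φ * N ^ γ) ^ α * k ^ β ∧
        N = ((1 - α) / (2 * φ * k)) * N ^ (1 - γ))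
       ↔ (k = (A ^ (1 / α) * α / 2) ^ (α / (1 - β - α)) ∧
          N = A ^ (-1 / ((1 - β - α) * γ))
              * ((1 - α) / (2 * φ)) ^ ((1 - β - 2 * α) / ((1 - β - α) * γ))
              * ((α / (1 - α)) * φ) ^ (-α / ((1 - β - α) * γ)))) :=
  stmt_3_general A φ α β γ hA hφ hα hβ hαβ hγ0
end

section
/- Let A>0, φ>0, 0<α, 0<β, α+β<1, 0<γ<1. Let (k̄_S, N̄_S) be the unique positive steady state of the perfect-substitutes system and (k̄_C, N̄_C) the unique positive steady state of the perfect-complements system (where the latter solves k = A[2(α/(1-α)) k² φ N^γ]^α k^β and N = ((1-α)/(4φk)) N^{1-γ}). Then k̄_C = k̄_S and N̄_C = 2^{-1/γ} N̄_S; in particular 0 < N̄_C < N̄_S. -/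
/-!
On a positive steady state the population equation `N = c · N^(1-γ)` says `N^γ = c`. Substituting
this into the capital equation collapses the effort term of both systems to `(α/2) k`, so both
capital stocks solve `k^(1-(α+β)) = A (α/2)^α` and coincide. With equal capital the two values
of `N^γ` differ by the factor 2 (the `4φ` versus `2φ` in the denominators), giving `N̄_C = 2^(-1/γ) N̄_S`.
-/

open Real

lemma rpow_eq_of_eq_mul_rpow_one_sub {x c γ : ℝ} (hx : 0 < x) (h : x = c * x ^ (1 - γ)) :
    x ^ γ = c := by
  rw [rpow_sub hx, rpow_one] at h
  have hxγ : 0 < x ^ γ := rpow_pos_of_pos hx γ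
  field_simp at h
  linarith

lemma rpow_one_sub_add_eq_of_eq_mul_rpow {A a k α β : ℝ} (ha : 0 ≤ a) (hk : 0 < k)
    (h : k = A * (a * k) ^ α * k ^ β) : k ^ (1 - (α + β)) = A * a ^ α := by
  rw [mul_rpow ha hk.le] at h
  rw [rpow_sub hk, rpow_one, rpow_add hk, div_eq_iff (by positivity)]
  nth_rewrite 1 [h]
  ring

theorem stmt_4_general (A φ α β γ : ℝ) (hφ : 0 < φ)
    (hα : 0 < α) (hβ : 0 < β) (hαβ : α + β < 1) (hγ0 : 0 < γ)
    (kS NS kC NC : ℝ) (hkS : 0 < kS) (hNS : 0 < NS) (hkC : 0 < kC) (hNC : 0 < NC)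
    (hS1 : kS = A * ((α / (1 - α)) * kS ^ 2 * φ * NS ^ γ) ^ α * kS ^ β)
    (hS2 : NS = ((1 - α) / (2 * φ * kS)) * NS ^ (1 - γ))
    (hC1 : kC = A * (2 * (α / (1 - α)) * kC ^ 2 * φ * NC ^ γ) ^ α * kC ^ β)
    (hC2 : NC = ((1 - α) / (4 * φ * kC)) * NC ^ (1 - γ)) :
    kC = kS ∧ NC = (2 : ℝ) ^ (-1 / γ) * NS ∧ 0 < NC ∧ NC < NS := by
  have hα1 : 1 - α ≠ 0 := by linarith
  have hNSγ := rpow_eq_of_eq_mul_rpow_one_sub hNS hS2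
  have hNCγ := rpow_eq_of_eq_mul_rpow_one_sub hNC hC2
  have hS : (α / (1 - α)) * kS ^ 2 * φ * NS ^ γ = α / 2 * kS := by
    rw [hNSγ]; field_simp
  have hC : 2 * (α / (1 - α)) * kC ^ 2 * φ * NC ^ γ = α / 2 * kC := by
    rw [hNCγ]; field_simp; ring
  have hk : kC = kS := by
    rw [← rpow_left_inj hkC.le hkS.le (by linarith : 1 - (α + β) ≠ 0),
      rpow_one_sub_add_eq_of_eq_mul_rpow (by positivity) hkC (hC ▸ hC1),
      rpow_one_sub_add_eq_of_eq_mul_rpow (by positivity) hkS (hS ▸ hS1)]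
  have hN : NC = (2 : ℝ) ^ (-1 / γ) * NS := by
    rw [← rpow_left_inj hNC.le (by positivity) hγ0.ne', mul_rpow (by positivity) hNS.le,
      ← rpow_mul zero_le_two, div_mul_cancel₀ _ hγ0.ne', rpow_neg_one, hNCγ, hNSγ, hk]
    field_simp
    ring
  have hΩ : (2 : ℝ) ^ (-1 / γ) < 1 :=
    rpow_lt_one_of_one_lt_of_neg one_lt_two (div_neg_of_neg_of_pos neg_one_lt_zero hγ0)
  exact ⟨hk, hN, hNC, hN ▸ mul_lt_of_lt_one_left hNS hΩ⟩

/-- Comparison of steady states: the perfect-complements steady state has the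
same human capital as the perfect-substitutes steady state and population
smaller by the factor `Ω = 2^{-1/γ}`. -/
theorem stmt_4 (A φ α β γ : ℝ) (hA : 0 < A) (hφ : 0 < φ)
    (hα : 0 < α) (hβ : 0 < β) (hαβ : α + β < 1) (hγ0 : 0 < γ) (hγ1 : γ < 1)
    (kS NS kC NC : ℝ) (hkS : 0 < kS) (hNS : 0 < NS) (hkC : 0 < kC) (hNC : 0 < NC)
    (hS1 : kS = A * ((α / (1 - α)) * kS ^ 2 * φ * NS ^ γ) ^ α * kS ^ β)
    (hS2 : NS = ((1 - α) / (2 * φ * kS)) * NS ^ (1 - γ))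
    (hC1 : kC = A * (2 * (α / (1 - α)) * kC ^ 2 * φ * NC ^ γ) ^ α * kC ^ β)
    (hC2 : NC = ((1 - α) / (4 * φ * kC)) * NC ^ (1 - γ)) :
    kC = kS ∧ NC = (2 : ℝ) ^ (-1 / γ) * NS ∧ 0 < NC ∧ NC < NS :=
  stmt_4_general A φ α β γ hφ hα hβ hαβ hγ0 kS NS kC NC hkS hNS hkC hNC hS1 hS2 hC1 hC2
end

section
/- Let 0<α, 0<β, α+β<1, A>0, b>0. There exists b̄ > 0 such that the equation A^{1/(1-β-α)} (α/(1+α))^{α/(1-β-α)} z^{(1-β)/(1-β-α)} (1+α-2z) = (1+α)b has exactly two solutions in (0,(1+α)/2) when 0<b<b̄, exactly one when b=b̄, and none when b>b̄; b̄ = H(z*)/(1+α) where z* is the unique maximizer of the left-hand side H on (0,(1+α)/2). -/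
/-!
Up to a positive constant, `H z = z ^ p * ((1 + α) / 2 - z)` with `p = (1 - β) / (1 - β - α) > 0`.
Its derivative `z ^ (p - 1) * (p a - (p + 1) z)` changes sign once, at `z* = p a / (p + 1)`, so `H`
rises strictly from `H 0 = 0` to its maximum at `z*` and falls strictly back to `H a = 0`. Hence
every level strictly between `0` and `H z*` is attained exactly twice (once on each side of `z*`,
by the intermediate value theorem and strict monotonicity), the level `H z*` only at `z*`, and
higher levels never.
-/

open Real Set

section Unimodal

variable {f : ℝ → ℝ} {l m r : ℝ}

theorem lt_of_strictMonoOn_of_strictAntiOn (hmono : StrictMonoOn f (Icc l m))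
    (hanti : StrictAntiOn f (Icc m r)) {z : ℝ} (hz : z ∈ Icc l r) (hne : z ≠ m) :
    f z < f m := by
  rcases hne.lt_or_gt with h | h
  · exact hmono ⟨hz.1, h.le⟩ ⟨hz.1.trans h.le, le_rfl⟩ h
  · exact hanti ⟨le_rfl, h.le.trans hz.2⟩ ⟨h.le, hz.2⟩ h

theorem exists_two_preimages_of_strictMonoOn_of_strictAntiOn (hf : ContinuousOn f (Icc l r))
    (hmono : StrictMonoOn f (Icc l m)) (hanti : StrictAntiOn f (Icc m r))
    (hlm : l ≤ m) (hmr : m ≤ r) {y : ℝ} (hl : f l < y) (hr : f r < y) (hy : y < f m) :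
    ∃ z₁ z₂, z₁ ≠ z₂ ∧ z₁ ∈ Ioo l r ∧ z₂ ∈ Ioo l r ∧ f z₁ = y ∧ f z₂ = y ∧
      ∀ z ∈ Ioo l r, f z = y → z = z₁ ∨ z = z₂ := by
  obtain ⟨z₁, hz₁, hfz₁⟩ :=
    intermediate_value_Ioo hlm (hf.mono (Icc_subset_Icc_right hmr)) ⟨hl, hy⟩
  obtain ⟨z₂, hz₂, hfz₂⟩ :=
    intermediate_value_Ioo' hmr (hf.mono (Icc_subset_Icc_left hlm)) ⟨hr, hy⟩
  refine ⟨z₁, z₂, (hz₁.2.trans hz₂.1).ne, ⟨hz₁.1, hz₁.2.trans_le hmr⟩,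
    ⟨hlm.trans_lt hz₂.1, hz₂.2⟩, hfz₁, hfz₂, fun z hz hfz => ?_⟩
  rcases le_total z m with h | h
  · exact Or.inl (hmono.injOn ⟨hz.1.le, h⟩ (Ioo_subset_Icc_self hz₁) (hfz.trans hfz₁.symm))
  · exact Or.inr (hanti.injOn ⟨h, hz.2.le⟩ (Ioo_subset_Icc_self hz₂) (hfz.trans hfz₂.symm))

end Unimodal

section RpowMulSub

variable {c p a : ℝ}

theorem hasDerivAt_rpow_mul_sub {z : ℝ} (hz : 0 < z) :
    HasDerivAt (fun z => c * z ^ p * (a - z)) (c * z ^ (p - 1) * (p * a - (p + 1) * z)) z := by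
  have hrpow := (Real.hasDerivAt_rpow_const (p := p) (Or.inl hz.ne')).const_mul c
  refine (hrpow.mul ((hasDerivAt_id z).const_sub a)).congr_deriv ?_
  have hzp : z ^ p = z ^ (p - 1) * z := by
    rw [← Real.rpow_add_one hz.ne']
    norm_num
  rw [hzp, id]
  ring

theorem continuous_rpow_mul_sub (hp : 0 < p) : Continuous fun z : ℝ => c * z ^ p * (a - z) :=
  (continuous_const.mul (Real.continuous_rpow_const hp.le)).mul (continuous_const.sub continuous_id)

theorem strictMonoOn_rpow_mul_sub (hc : 0 < c) (hp : 0 < p) :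
    StrictMonoOn (fun z => c * z ^ p * (a - z)) (Icc 0 (p * a / (p + 1))) := by
  refine strictMonoOn_of_deriv_pos (convex_Icc _ _) (continuous_rpow_mul_sub hp).continuousOn
    fun z hz => ?_
  rw [interior_Icc] at hz
  rw [(hasDerivAt_rpow_mul_sub hz.1).deriv]
  have hlt : (p + 1) * z < p * a := (lt_div_iff₀' (by linarith)).mp hz.2
  have := Real.rpow_pos_of_pos hz.1 (p - 1)
  have : 0 < p * a - (p + 1) * z := by linarith
  positivity

theorem strictAntiOn_rpow_mul_sub (hc : 0 < c) (hp : 0 < p) (ha : 0 < a) :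
    StrictAntiOn (fun z => c * z ^ p * (a - z)) (Icc (p * a / (p + 1)) a) := by
  refine strictAntiOn_of_deriv_neg (convex_Icc _ _) (continuous_rpow_mul_sub hp).continuousOn
    fun z hz => ?_
  rw [interior_Icc] at hz
  have hz0 : 0 < z := lt_trans (by positivity) hz.1
  rw [(hasDerivAt_rpow_mul_sub hz0).deriv]
  have hgt : p * a < (p + 1) * z := (div_lt_iff₀' (by linarith)).mp hz.1
  exact mul_neg_of_pos_of_neg (by positivity) (by linarith)

end RpowMulSub

theorem stmt_10_general (α β A : ℝ) (hα : 0 < α) (hαβ : α + β < 1)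
    (hA : 0 < A) :
    let H := fun z : ℝ =>
      A ^ (1 / (1 - β - α)) * (α / (1 + α)) ^ (α / (1 - β - α))
        * z ^ ((1 - β) / (1 - β - α)) * (1 + α - 2 * z)
    let I := Set.Ioo (0 : ℝ) ((1 + α) / 2)
    ∃ bbar : ℝ, 0 < bbar ∧
      (∃ zstar ∈ I, (∀ z ∈ I, z ≠ zstar → H z < H zstar) ∧
        bbar = H zstar / (1 + α)) ∧
      (∀ b : ℝ, 0 < b → b < bbar →
        ∃ z₁ z₂, z₁ ≠ z₂ ∧ z₁ ∈ I ∧ z₂ ∈ I ∧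
          H z₁ = (1 + α) * b ∧ H z₂ = (1 + α) * b ∧
          ∀ z ∈ I, H z = (1 + α) * b → z = z₁ ∨ z = z₂) ∧
      (∃! z : ℝ, z ∈ I ∧ H z = (1 + α) * bbar) ∧
      (∀ b : ℝ, bbar < b → ∀ z ∈ I, H z ≠ (1 + α) * b) := by
  intro H I
  set p := (1 - β) / (1 - β - α)
  set a := (1 + α) / 2
  set c := 2 * (A ^ (1 / (1 - β - α)) * (α / (1 + α)) ^ (α / (1 - β - α)))
  have hp : 0 < p := div_pos (by linarith) (by linarith)
  have ha : 0 < a := by positivity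
  have hc : 0 < c := by positivity
  have hH : H = fun z => c * z ^ p * (a - z) := by
    funext z
    simp only [H, c, a]
    ring
  set zstar := p * a / (p + 1)
  have hzstar : zstar ∈ Ioo 0 a :=
    ⟨by positivity, (div_lt_iff₀ (by linarith)).mpr (by linarith)⟩
  have hcont : ContinuousOn H (Icc 0 a) := hH ▸ (continuous_rpow_mul_sub hp).continuousOn
  have hmono : StrictMonoOn H (Icc 0 zstar) := hH ▸ strictMonoOn_rpow_mul_sub hc hp
  have hanti : StrictAntiOn H (Icc zstar a) := hH ▸ strictAntiOn_rpow_mul_sub hc hp ha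
  have hmax : ∀ z ∈ I, z ≠ zstar → H z < H zstar := fun z hz =>
    lt_of_strictMonoOn_of_strictAntiOn hmono hanti (Ioo_subset_Icc_self hz)
  have hH0 : H 0 = 0 := by simp [hH, Real.zero_rpow hp.ne']
  have hHa : H a = 0 := by simp [hH]
  have hHzstar : 0 < H zstar := by
    rw [hH]
    exact mul_pos (mul_pos hc (Real.rpow_pos_of_pos hzstar.1 p)) (sub_pos.mpr hzstar.2)
  have h1α : 0 < 1 + α := by linarith
  have hlevel : (1 + α) * (H zstar / (1 + α)) = H zstar := mul_div_cancel₀ _ h1α.ne'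
  refine ⟨H zstar / (1 + α), div_pos hHzstar h1α, ⟨zstar, hzstar, hmax, rfl⟩,
    fun b hb hbbar => ?_, ⟨zstar, ⟨hzstar, hlevel.symm⟩, fun z hz => ?_⟩,
    fun b hbbar z hz => ?_⟩
  · exact exists_two_preimages_of_strictMonoOn_of_strictAntiOn hcont hmono hanti
      hzstar.1.le hzstar.2.le (by rw [hH0]; positivity) (by rw [hHa]; positivity)
      ((lt_div_iff₀' h1α).mp hbbar)
  · by_contra hne
    exact (hmax z hz.1 hne).ne (hz.2.trans hlevel)
  · have hlt := (div_lt_iff₀' h1α).mp hbbar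
    rcases eq_or_ne z zstar with rfl | hne
    · exact hlt.ne
    · exact ((hmax z hz hne).trans hlt).ne

/-- Threshold subsidy (Proposition 5): there exists `b̄ > 0` such that the
steady-state equation `H(z) = (1+α)b` has exactly two solutions in
`(0,(1+α)/2)` for `0 < b < b̄`, exactly one for `b = b̄`, and none for
`b > b̄`; moreover `b̄ = H(z*)/(1+α)` for the unique maximizer `z*` of `H`. -/
theorem stmt_10 (α β A : ℝ) (hα : 0 < α) (hβ : 0 < β) (hαβ : α + β < 1)
    (hA : 0 < A) :
    let H := fun z : ℝ =>
      A ^ (1 / (1 - β - α)) * (α / (1 + α)) ^ (α / (1 - β - α))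
        * z ^ ((1 - β) / (1 - β - α)) * (1 + α - 2 * z)
    let I := Set.Ioo (0 : ℝ) ((1 + α) / 2)
    ∃ bbar : ℝ, 0 < bbar ∧
      (∃ zstar ∈ I, (∀ z ∈ I, z ≠ zstar → H z < H zstar) ∧
        bbar = H zstar / (1 + α)) ∧
      (∀ b : ℝ, 0 < b → b < bbar →
        ∃ z₁ z₂, z₁ ≠ z₂ ∧ z₁ ∈ I ∧ z₂ ∈ I ∧
          H z₁ = (1 + α) * b ∧ H z₂ = (1 + α) * b ∧
          ∀ z ∈ I, H z = (1 + α) * b → z = z₁ ∨ z = z₂) ∧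
      (∃! z : ℝ, z ∈ I ∧ H z = (1 + α) * bbar) ∧
      (∀ b : ℝ, bbar < b → ∀ z ∈ I, H z ≠ (1 + α) * b) :=
  stmt_10_general α β A hα hαβ hA
end

section
/- Let 0<α<1, k>0, X>0, b>0, τ ∈ [0,1) with (1-τ)X > (1+α)b/2 (precisely, 2(1-τ)X > (1+α)b). Under perfect substitutability, the first-order conditions -n/c + α/e = 0 and [-(1-τ)X + b - e]/c + 1/n = 0 with c = (1-τ)(k - Xn) + bn - ne are solved by e* = (α/(1-α))[(1-τ)X - b] and n* = (1-α)[(1-τ)k + b n*] / (2(1-τ)X - (1+α)b). -/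
open Real

/-!
Write `P = (1-τ)X - b` for the net cost of a child. The education rule says `(1-α)e = αP`,
and since `2(1-τ)X - (1+α)b = 2P + (1-α)b`, the fertility rule says `2nP = (1-α)(1-τ)k`.
Substituting both into the budget gives `(1-α)c = nP`, from which `αc = ne` and `c = n(P + e)`:
these are the two first-order conditions with the denominators cleared.
-/

def consumption (τ k X b n e : ℝ) : ℝ := (1 - τ) * (k - X * n) + b * n - n * e

section FirstOrderConditions

variable {α c n e : ℝ}

lemma education_foc_of_mul_eq (hc : c ≠ 0) (he : e ≠ 0) (h : α * c = n * e) :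
    -(n / c) + α / e = 0 := by
  field_simp
  linarith

lemma fertility_foc_of_eq_mul {q : ℝ} (hc : c ≠ 0) (hn : n ≠ 0) (h : c = n * (e - q)) :
    (q - e) / c + 1 / n = 0 := by
  field_simp
  linarith

end FirstOrderConditions

section CandidateSolution

variable {α k X b τ n e : ℝ}

lemma one_sub_mul_eq_of_education_rule (hα : 1 - α ≠ 0)
    (h : e = (α / (1 - α)) * ((1 - τ) * X - b)) :
    (1 - α) * e = α * ((1 - τ) * X - b) := by
  rw [h]
  field_simp

lemma two_mul_netCost_eq_of_fertility_rule (hD : 2 * (1 - τ) * X - (1 + α) * b ≠ 0)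
    (h : n = (1 - α) * ((1 - τ) * k + b * n) / (2 * (1 - τ) * X - (1 + α) * b)) :
    2 * n * ((1 - τ) * X - b) = (1 - α) * ((1 - τ) * k) := by
  rw [eq_div_iff hD] at h
  linear_combination h

lemma one_sub_mul_consumption (he : (1 - α) * e = α * ((1 - τ) * X - b))
    (hn : 2 * n * ((1 - τ) * X - b) = (1 - α) * ((1 - τ) * k)) :
    (1 - α) * consumption τ k X b n e = n * ((1 - τ) * X - b) := by
  unfold consumption
  linear_combination -hn - n * he

end CandidateSolution

theorem stmt_13_general (α k X b τ : ℝ) (hα1 : α < 1)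
    (hfeas : (1 + α) * b < 2 * (1 - τ) * X) :
    ∀ n e : ℝ, 0 < n → 0 < e →
      0 < (1 - τ) * (k - X * n) + b * n - n * e →
      e = (α / (1 - α)) * ((1 - τ) * X - b) →
      n = (1 - α) * ((1 - τ) * k + b * n) / (2 * (1 - τ) * X - (1 + α) * b) →
      (-(n / ((1 - τ) * (k - X * n) + b * n - n * e)) + α / e = 0 ∧
       (-((1 - τ) * X) + b - e) / ((1 - τ) * (k - X * n) + b * n - n * e)
         + 1 / n = 0) := by
  intro n e hn he hc hee hnn
  have hα : 1 - α ≠ 0 := by linarith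
  have he' := one_sub_mul_eq_of_education_rule hα hee
  have hc' := one_sub_mul_consumption he'
    (two_mul_netCost_eq_of_fertility_rule (by linarith) hnn)
  unfold consumption at hc'
  refine ⟨education_foc_of_mul_eq hc.ne' he.ne' ?_, fertility_foc_of_eq_mul hc.ne' hn.ne' ?_⟩
  · refine mul_left_cancel₀ hα ?_
    linear_combination α * hc' - n * he'
  · refine mul_left_cancel₀ hα ?_
    linear_combination hc' - n * he'

/-- Household problem under perfect substitutability with exogenous tax `τ`
and linear subsidy `b n`: the first-order conditions `-n/c + α/e = 0` and
`(-(1-τ)X + b - e)/c + 1/n = 0`, with `c = (1-τ)(k - Xn) + bn - ne`, are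
solved by `e* = (α/(1-α))[(1-τ)X - b]` and the implicit fertility rule
`n* = (1-α)[(1-τ)k + b n*]/(2(1-τ)X - (1+α)b)`. -/
theorem stmt_13 (α k X b τ : ℝ) (hα : 0 < α) (hα1 : α < 1) (hk : 0 < k)
    (hX : 0 < X) (hb : 0 < b) (hτ0 : 0 ≤ τ) (hτ1 : τ < 1)
    (hfeas : (1 + α) * b < 2 * (1 - τ) * X) :
    ∀ n e : ℝ, 0 < n → 0 < e →
      0 < (1 - τ) * (k - X * n) + b * n - n * e →
      e = (α / (1 - α)) * ((1 - τ) * X - b) →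
      n = (1 - α) * ((1 - τ) * k + b * n) / (2 * (1 - τ) * X - (1 + α) * b) →
      (-(n / ((1 - τ) * (k - X * n) + b * n - n * e)) + α / e = 0 ∧
       (-((1 - τ) * X) + b - e) / ((1 - τ) * (k - X * n) + b * n - n * e)
         + 1 / n = 0) :=
  stmt_13_general α k X b τ hα1 hfeas
end
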